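/- Let 𝟏 = (1,1,1,...) ∈ {1,2}^{ℤ_{>0}} and let X_𝟏 = {0} ∪ ⋃_{n≥1} [1/2^n, 1/2^n + 1/2^{n+1}]. Then the metric space (ℳ_{X_𝟏}, d_L) of isometry classes of compact metric spaces at finite Lipschitz distance from X_𝟏 is not separable. -/

import Mathlib

/-!
A homeomorphism `X_u ≃ X_v` (all `u n, v n ≥ 1`) sends each interval `I(n, u n)` into a single
interval `I(σ n, v (σ n))`, because the intervals are separated by gaps, and it fixes `0`.
Distances to `0` and lengths of intervals are powers of `2`, so if the map and its inverse
have Lipschitz constants `L`, `M` with `L M < 2`, comparing them forces `σ = id` and `u = v`.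
On the other hand, for every `S ⊆ ℕ+` the space `X_{u_S}` with `u_S = 2` on `S` and `1` off `S`
is bi-Lipschitz equivalent to `X_𝟏` (halve the intervals indexed by `S`). If a countable family
were dense, two sets `S ≠ T` would give spaces within `d_L < (log 2) / 2` of the same member;
composing the two maps gives `L M < 2`, so `S = T`.
-/

open ENNReal

/-- The dilation (smallest Lipschitz constant) of a map between metric spaces. -/
noncomputable def dil {X : Type*} {Y : Type*} [MetricSpace X] [MetricSpace Y]
    (f : X → Y) : ℝ :=
  sInf {K : ℝ | ∀ x y : X, dist (f x) (f y) ≤ K * dist x y}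

/-- A bijection is a bi-Lipschitz homeomorphism if it and its inverse are Lipschitz. -/
def IsBiLipschitzEquiv {X : Type*} {Y : Type*} [MetricSpace X] [MetricSpace Y]
    (f : X ≃ Y) : Prop :=
  (∃ K : NNReal, LipschitzWith K f) ∧ (∃ K : NNReal, LipschitzWith K f.symm)

/-- The quantity `|log dil f| + |log dil f⁻¹|`. -/
noncomputable def lipCost {X : Type*} {Y : Type*} [MetricSpace X] [MetricSpace Y]
    (f : X ≃ Y) : ℝ :=
  |Real.log (dil (f : X → Y))| + |Real.log (dil (f.symm : Y → X))|

/-- The Lipschitz distance: the infimum of `|log dil f| + |log dil f⁻¹|` over all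
bi-Lipschitz homeomorphisms `f : X → Y` (`∞` if none exists). -/
noncomputable def lipDist (X : Type*) (Y : Type*) [MetricSpace X] [MetricSpace Y] : ℝ≥0∞ :=
  ⨅ (f : X ≃ Y) (_ : IsBiLipschitzEquiv f), ENNReal.ofReal (lipCost f)

/-- The interval `I(n,m) = [1/2^n, 1/2^n + 1/2^(n+m)]`. -/
def Iset (n m : ℕ) : Set ℝ := Set.Icc ((1:ℝ)/2^n) ((1:ℝ)/2^n + 1/2^(n+m))

/-- `X_u = {0} ∪ ⋃_{n ≥ 1} I(n, u_n)`, with the Euclidean metric inherited from `ℝ`. -/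
def Xset (u : ℕ+ → ℕ) : Set ℝ := {0} ∪ ⋃ n : ℕ+, Iset (n : ℕ) (u n)

/-- A bundled compact metric space. -/
structure CptMet where
  carrier : Type
  [inst : MetricSpace carrier]
  [cpt : CompactSpace carrier]

attribute [instance] CptMet.inst CptMet.cpt

open Set Function Real
open scoped NNReal

section LipschitzDistance

variable {X Y Z : Type*} [MetricSpace X] [MetricSpace Y] [MetricSpace Z]

theorem dist_le_dil_mul {K : ℝ≥0} {f : X → Y} (hf : LipschitzWith K f) (x y : X) :
    dist (f x) (f y) ≤ dil f * dist x y := by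
  rcases eq_or_ne x y with rfl | hxy
  · simp
  have hxy : 0 < dist x y := dist_pos.2 hxy
  rw [← div_le_iff₀ hxy]
  exact le_csInf ⟨K, hf.dist_le_mul⟩ fun L hL => (div_le_iff₀ hxy).2 (hL x y)

theorem lipschitzWith_toNNReal_dil {K : ℝ≥0} {f : X → Y} (hf : LipschitzWith K f) :
    LipschitzWith (dil f).toNNReal f :=
  LipschitzWith.of_dist_le_mul fun x y =>
    (dist_le_dil_mul hf x y).trans (by gcongr; exact Real.le_coe_toNNReal _)

theorem Real.coe_toNNReal_le_exp_abs_log (a : ℝ) : (a.toNNReal : ℝ) ≤ exp |log a| := by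
  rcases le_or_gt a 0 with ha | ha
  · rw [Real.toNNReal_of_nonpos ha]
    positivity
  · rw [Real.coe_toNNReal _ ha.le]
    calc a = exp (log a) := (exp_log ha).symm
      _ ≤ exp |log a| := exp_le_exp.2 (le_abs_self _)

theorem lipDist_ne_top_of_isBiLipschitzEquiv {f : X ≃ Y} (hf : IsBiLipschitzEquiv f) :
    lipDist X Y ≠ ⊤ :=
  ne_top_of_le_ne_top ENNReal.ofReal_ne_top (iInf₂_le f hf)

theorem exists_lipschitzWith_equiv_of_lipDist_lt {c : ℝ} (h : lipDist X Y < ENNReal.ofReal c) :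
    ∃ (f : X ≃ Y) (K K' : ℝ≥0), LipschitzWith K f ∧ LipschitzWith K' f.symm ∧
      (K * K' : ℝ) < exp c := by
  obtain ⟨f, hf⟩ := iInf_lt_iff.1 h
  obtain ⟨⟨⟨K, hK⟩, ⟨K', hK'⟩⟩, hcost⟩ := iInf_lt_iff.1 hf
  refine ⟨f, _, _, lipschitzWith_toNNReal_dil hK, lipschitzWith_toNNReal_dil hK', ?_⟩
  calc _ ≤ exp |log (dil f)| * exp |log (dil f.symm)| :=
        mul_le_mul (Real.coe_toNNReal_le_exp_abs_log _) (Real.coe_toNNReal_le_exp_abs_log _)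
          (by positivity) (by positivity)
    _ = exp (lipCost f) := by rw [lipCost, exp_add]
    _ < exp c := exp_lt_exp.2 (ENNReal.ofReal_lt_ofReal_iff'.1 hcost).1

theorem exists_lipschitzWith_equiv_of_lipDist_lt_of_lipDist_lt {c c' : ℝ}
    (hX : lipDist X Z < ENNReal.ofReal c) (hY : lipDist Y Z < ENNReal.ofReal c') :
    ∃ (h : X ≃ Y) (K K' : ℝ≥0), LipschitzWith K h ∧ LipschitzWith K' h.symm ∧
      (K * K' : ℝ) < exp (c + c') := by
  obtain ⟨f, K, K', hK, hK', hf⟩ := exists_lipschitzWith_equiv_of_lipDist_lt hX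
  obtain ⟨g, L, L', hL, hL', hg⟩ := exists_lipschitzWith_equiv_of_lipDist_lt hY
  refine ⟨f.trans g.symm, L' * K, K' * L, hL'.comp hK, hK'.comp hL, ?_⟩
  calc ((L' * K : ℝ≥0) : ℝ) * (K' * L : ℝ≥0) = (K * K') * (L * L') := by push_cast; ring
    _ < exp c * exp c' := mul_lt_mul'' hf hg (by positivity) (by positivity)
    _ = exp (c + c') := (exp_add c c').symm

end LipschitzDistance

section Geometry

theorem one_div_two_pow_le_half_of_lt {k n : ℕ} (h : k < n) :
    (1 : ℝ) / 2 ^ n ≤ 1 / 2 ^ k / 2 := by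
  rw [div_div, ← pow_succ]
  exact one_div_pow_le_one_div_pow_of_le one_le_two h

theorem left_mem_Iset (n m : ℕ) : (1 : ℝ) / 2 ^ n ∈ Iset n m :=
  left_mem_Icc.2 (le_add_of_nonneg_right (by positivity))

theorem right_mem_Iset (n m : ℕ) : (1 : ℝ) / 2 ^ n + 1 / 2 ^ (n + m) ∈ Iset n m :=
  right_mem_Icc.2 (le_add_of_nonneg_right (by positivity))

theorem pos_of_mem_Iset {n m : ℕ} {x : ℝ} (hx : x ∈ Iset n m) : 0 < x :=
  lt_of_lt_of_le (by positivity) hx.1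

theorem Iset_subset_Icc {n m : ℕ} (hm : 1 ≤ m) :
    Iset n m ⊆ Icc (1 / 2 ^ n) (3 / 2 * (1 / 2 ^ n)) := by
  have := one_div_two_pow_le_half_of_lt (show n < n + m by omega)
  exact Icc_subset_Icc le_rfl (by linarith)

/-- Each `I(n, m)` with `m ≥ 1` lies in `[2⁻ⁿ, (3/2) 2⁻ⁿ]`, so the window
`[(7/8) 2⁻ⁿ, (7/4) 2⁻ⁿ]` around it meets no other such interval. -/
theorem eq_of_mem_Iset_of_mem_Icc {k n m : ℕ} (hm : 1 ≤ m) {x : ℝ} (hx : x ∈ Iset k m)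
    (h : x ∈ Icc (7 / 8 * (1 / 2 ^ n)) (7 / 4 * (1 / 2 ^ n))) : k = n := by
  obtain ⟨hk₁, hk₂⟩ := Iset_subset_Icc hm hx
  have hn : (0 : ℝ) < 1 / 2 ^ n := by positivity
  rcases lt_trichotomy k n with hkn | rfl | hnk
  · linarith [one_div_two_pow_le_half_of_lt hkn, h.2]
  · rfl
  · linarith [one_div_two_pow_le_half_of_lt hnk, h.1]

theorem eq_of_mem_Iset_of_mem_Iset {k n a b : ℕ} (ha : 1 ≤ a) (hb : 1 ≤ b) {x : ℝ}
    (hk : x ∈ Iset k a) (hn : x ∈ Iset n b) : k = n := by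
  obtain ⟨h₁, h₂⟩ := Iset_subset_Icc hb hn
  have : (0 : ℝ) < 1 / 2 ^ n := by positivity
  exact eq_of_mem_Iset_of_mem_Icc ha hk ⟨by linarith, by linarith⟩

variable {u v : ℕ+ → ℕ}

theorem mem_Xset {x : ℝ} : x ∈ Xset u ↔ x = 0 ∨ ∃ n : ℕ+, x ∈ Iset n (u n) := by
  simp [Xset]

theorem zero_mem_Xset (u : ℕ+ → ℕ) : (0 : ℝ) ∈ Xset u :=
  mem_Xset.2 (Or.inl rfl)

theorem Iset_subset_Xset (u : ℕ+ → ℕ) (n : ℕ+) : Iset n (u n) ⊆ Xset u :=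
  fun _ hx => mem_Xset.2 (Or.inr ⟨n, hx⟩)

instance (u : ℕ+ → ℕ) : Zero (Xset u) := ⟨⟨0, zero_mem_Xset u⟩⟩

@[simp]
theorem coe_zero_Xset : ((0 : Xset u) : ℝ) = 0 := rfl

theorem dist_zero_Xset (x : Xset u) : dist x 0 = |(x : ℝ)| := by
  rw [Subtype.dist_eq, coe_zero_Xset, Real.dist_0_eq_abs]

theorem Xset_eq_iInter (u : ℕ+ → ℕ) :
    Xset u = ⋂ N : ℕ+, (Icc 0 (1 / 2 ^ (N : ℕ)) ∪ ⋃ n ∈ Finset.Iic N, Iset n (u n)) := by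
  ext x
  simp only [mem_iInter, mem_union, mem_iUnion, Finset.mem_Iic, exists_prop]
  constructor
  · rintro hx N
    rcases mem_Xset.1 hx with rfl | ⟨n, hn⟩
    · exact Or.inl ⟨le_rfl, by positivity⟩
    rcases le_or_gt n N with hnN | hNn
    · exact Or.inr ⟨n, hnN, hn⟩
    refine Or.inl ⟨(pos_of_mem_Iset hn).le, hn.2.trans ?_⟩
    have h₁ := one_div_two_pow_le_half_of_lt (PNat.coe_lt_coe _ _ |>.2 hNn)
    have h₂ := one_div_pow_le_one_div_pow_of_le (one_le_two (α := ℝ)) (Nat.le_add_right n (u n))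
    linarith
  · intro hx
    rcases (hx 1).elim (fun h => h.1.eq_or_lt) (fun ⟨n, _, hn⟩ => Or.inr (pos_of_mem_Iset hn))
      with h0 | hpos
    · exact h0 ▸ zero_mem_Xset u
    obtain ⟨N, hN⟩ := exists_pow_lt_of_lt_one hpos (one_half_lt_one (α := ℝ))
    rcases hx N.succPNat with h | ⟨n, -, hn⟩
    · have : (1 : ℝ) / 2 ^ (N + 1) ≤ 1 / 2 ^ N :=
        one_div_pow_le_one_div_pow_of_le one_le_two (Nat.le_succ N)
      rw [div_pow, one_pow] at hN
      exact absurd h.2 (by simp only [Nat.succPNat_coe, Nat.succ_eq_add_one]; linarith)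
    · exact Iset_subset_Xset u n hn

theorem isCompact_Xset (u : ℕ+ → ℕ) : IsCompact (Xset u) := by
  have hK : ∀ N : ℕ+, IsCompact (Icc 0 (1 / 2 ^ (N : ℕ)) ∪ ⋃ n ∈ Finset.Iic N, Iset n (u n)) :=
    fun N => isCompact_Icc.union (Finset.isCompact_biUnion _ fun _ _ => isCompact_Icc)
  rw [Xset_eq_iInter]
  exact (hK 1).of_isClosed_subset (isClosed_iInter fun N => (hK N).isClosed) (iInter_subset _ 1)

instance (u : ℕ+ → ℕ) : CompactSpace (Xset u) :=
  isCompact_iff_compactSpace.1 (isCompact_Xset u)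

theorem mem_Iset_of_mem_Xset (hu : ∀ n, 1 ≤ u n) {n : ℕ+} {x : ℝ} (hx : x ∈ Xset u)
    (h : x ∈ Icc (7 / 8 * (1 / 2 ^ (n : ℕ))) (7 / 4 * (1 / 2 ^ (n : ℕ)))) :
    x ∈ Iset n (u n) := by
  rcases mem_Xset.1 hx with rfl | ⟨k, hk⟩
  · have : (0 : ℝ) < 1 / 2 ^ (n : ℕ) := by positivity
    linarith [h.1]
  · rwa [← PNat.coe_injective (eq_of_mem_Iset_of_mem_Icc (hu k) hk h)]

/-- The points `(7/8) 2⁻ⁿ` and `(7/4) 2⁻ⁿ` are gaps of `X_u` on either side of `I(n, u n)`. -/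
theorem IsPreconnected.subset_Iset (hu : ∀ n, 1 ≤ u n) {J : Set ℝ} (hJ : IsPreconnected J)
    (hJX : J ⊆ Xset u) {n : ℕ+} {w : ℝ} (hwJ : w ∈ J) (hw : w ∈ Iset n (u n)) :
    J ⊆ Iset n (u n) := by
  obtain ⟨hw₁, hw₂⟩ := Iset_subset_Icc (hu n) hw
  have ha : (0 : ℝ) < 1 / 2 ^ (n : ℕ) := by positivity
  have hgap : ∀ p ∈ J, p ∈ Icc (7 / 8 * (1 / 2 ^ (n : ℕ))) (7 / 4 * (1 / 2 ^ (n : ℕ))) →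
      p ∈ Icc (1 / 2 ^ (n : ℕ)) (3 / 2 * (1 / 2 ^ (n : ℕ))) :=
    fun p hp hpw => Iset_subset_Icc (hu n) (mem_Iset_of_mem_Xset hu (hJX hp) hpw)
  intro z hz
  refine mem_Iset_of_mem_Xset hu (hJX hz) ⟨?_, ?_⟩
  · by_contra! hzlt
    have := hgap _ (hJ.ordConnected.out hz hwJ ⟨hzlt.le, by linarith⟩) ⟨le_rfl, by linarith⟩
    linarith [this.1]
  · by_contra! hzgt
    have := hgap _ (hJ.ordConnected.out hwJ hz ⟨by linarith, hzgt.le⟩) ⟨by linarith, le_rfl⟩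
    linarith [this.2]

end Geometry

section Rigidity

variable {u v : ℕ+ → ℕ}

def MapsIntervals (f : Xset u → Xset v) (σ : ℕ+ → ℕ+) : Prop :=
  ∀ n : ℕ+, MapsTo f (Subtype.val ⁻¹' Iset n (u n)) (Subtype.val ⁻¹' Iset (σ n) (v (σ n)))

theorem exists_mapsTo_Iset (hv : ∀ n, 1 ≤ v n) {f : Xset u → Xset v} (hf : Continuous f)
    (hinj : Injective f) (n : ℕ+) :
    ∃ m : ℕ+, MapsTo f (Subtype.val ⁻¹' Iset n (u n)) (Subtype.val ⁻¹' Iset m (v m)) := by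
  set s : Set (Xset u) := Subtype.val ⁻¹' Iset n (u n)
  have hs : IsPreconnected s := by
    rw [← Topology.IsInducing.subtypeVal.isPreconnected_image, Subtype.image_preimage_coe,
      inter_eq_right.2 (Iset_subset_Xset u n)]
    exact isPreconnected_Icc
  set J : Set ℝ := (fun x => (f x : ℝ)) '' s
  have hJ : IsPreconnected J := hs.image _ (continuous_subtype_val.comp hf).continuousOn
  have hJX : J ⊆ Xset v := by
    rintro _ ⟨x, -, rfl⟩
    exact (f x).2
  obtain ⟨w, hwJ, hw0⟩ : ∃ w ∈ J, w ≠ 0 := by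
    by_contra! hJ0
    let P : Xset u := ⟨_, Iset_subset_Xset u n (left_mem_Iset _ _)⟩
    let R : Xset u := ⟨_, Iset_subset_Xset u n (right_mem_Iset _ _)⟩
    have hPR : P = R := hinj (Subtype.ext <|
      (hJ0 _ ⟨P, left_mem_Iset _ _, rfl⟩).trans (hJ0 _ ⟨R, right_mem_Iset _ _, rfl⟩).symm)
    have : (0 : ℝ) < 1 / 2 ^ ((n : ℕ) + u n) := by positivity
    linarith [congrArg Subtype.val hPR]
  obtain ⟨m, hm⟩ := (mem_Xset.1 (hJX hwJ)).resolve_left hw0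
  exact ⟨m, fun x hx => hJ.subset_Iset hv hJX hwJ hm ⟨x, hx, rfl⟩⟩

theorem MapsIntervals.leftInverse (hu : ∀ n, 1 ≤ u n) {f : Xset u → Xset v}
    {g : Xset v → Xset u} {σ τ : ℕ+ → ℕ+} (hf : MapsIntervals f σ) (hg : MapsIntervals g τ)
    (hgf : LeftInverse g f) : LeftInverse τ σ := by
  intro n
  let P : Xset u := ⟨_, Iset_subset_Xset u n (left_mem_Iset _ _)⟩
  have hP : (g (f P) : ℝ) ∈ Iset (τ (σ n)) (u (τ (σ n))) := hg _ (hf n (left_mem_Iset _ _))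
  rw [hgf P] at hP
  exact PNat.coe_injective (eq_of_mem_Iset_of_mem_Iset (hu _) (hu n) hP (left_mem_Iset _ _))

theorem MapsIntervals.apply_zero_of_leftInverse {f : Xset u → Xset v} {g : Xset v → Xset u}
    {σ : ℕ+ → ℕ+} (hf : MapsIntervals f σ) (hfg : LeftInverse f g) : g 0 = 0 := by
  rcases mem_Xset.1 (g 0).2 with h0 | ⟨k, hk⟩
  · exact Subtype.ext h0
  · have := hf k hk
    rw [mem_preimage, hfg 0] at this
    exact absurd (pos_of_mem_Iset this) (lt_irrefl 0)

theorem two_zpow_sub_le_of_div_le {a b : ℕ} {C : ℝ} (h : 1 / 2 ^ a ≤ C * (1 / 2 ^ b)) :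
    (2 : ℝ) ^ ((b : ℤ) - a) ≤ C := by
  rw [zpow_sub₀ two_ne_zero, zpow_natCast, zpow_natCast, div_le_iff₀ (by positivity)]
  rw [mul_one_div, div_le_div_iff₀ (by positivity) (by positivity), one_mul] at h
  exact h

theorem MapsIntervals.two_zpow_sub_le_of_lipschitzWith {f : Xset u → Xset v} {σ : ℕ+ → ℕ+}
    (hf : MapsIntervals f σ) (hf0 : f 0 = 0) {L : ℝ≥0} (hL : LipschitzWith L f) (n : ℕ+) :
    (2 : ℝ) ^ (((n : ℕ) : ℤ) - (σ n : ℕ)) ≤ L := by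
  let P : Xset u := ⟨_, Iset_subset_Xset u n (left_mem_Iset _ _)⟩
  have hP : (f P : ℝ) ∈ Iset (σ n) (v (σ n)) := hf n (left_mem_Iset _ _)
  apply two_zpow_sub_le_of_div_le
  calc (1 : ℝ) / 2 ^ (σ n : ℕ) ≤ f P := hP.1
    _ = dist (f P) (f 0) := by rw [hf0, dist_zero_Xset, abs_of_pos (pos_of_mem_Iset hP)]
    _ ≤ L * dist P 0 := hL.dist_le_mul P 0
    _ = L * (1 / 2 ^ (n : ℕ)) := by rw [dist_zero_Xset, abs_of_pos (by positivity)]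

theorem MapsIntervals.two_zpow_sub_le_of_antilipschitzWith {f : Xset u → Xset v}
    {σ : ℕ+ → ℕ+} (hf : MapsIntervals f σ) {M : ℝ≥0} (hM : AntilipschitzWith M f) (n : ℕ+) :
    (2 : ℝ) ^ ((((σ n : ℕ) + v (σ n) : ℕ) : ℤ) - ((n : ℕ) + u n : ℕ)) ≤ M := by
  let P : Xset u := ⟨_, Iset_subset_Xset u n (left_mem_Iset _ _)⟩
  let R : Xset u := ⟨_, Iset_subset_Xset u n (right_mem_Iset _ _)⟩
  have hP : (f P : ℝ) ∈ Iset (σ n) (v (σ n)) := hf n (left_mem_Iset _ _)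
  have hR : (f R : ℝ) ∈ Iset (σ n) (v (σ n)) := hf n (right_mem_Iset _ _)
  apply two_zpow_sub_le_of_div_le
  calc (1 : ℝ) / 2 ^ ((n : ℕ) + u n) = dist P R := by
        rw [Subtype.dist_eq, dist_self_add_right, Real.norm_eq_abs, abs_of_pos (by positivity)]
    _ ≤ M * dist (f P) (f R) := hM.le_mul_dist P R
    _ ≤ M * (1 / 2 ^ ((σ n : ℕ) + v (σ n))) := by
        gcongr
        simpa only [Subtype.dist_eq, add_sub_cancel_left] using Real.dist_le_of_mem_Icc hP hR

theorem add_nonpos_of_two_zpow_le {a b : ℤ} {L M : ℝ} (ha : 2 ^ a ≤ L) (hb : 2 ^ b ≤ M)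
    (hLM : L * M < 2) : a + b ≤ 0 := by
  by_contra! hab
  have h2 : (2 : ℝ) ≤ 2 ^ a * 2 ^ b := by
    rw [← zpow_add₀ two_ne_zero]
    simpa using zpow_le_zpow_right₀ (one_le_two (α := ℝ)) (show 1 ≤ a + b by omega)
  nlinarith [mul_le_mul ha hb (zpow_pos two_pos b).le ((zpow_pos two_pos a).le.trans ha)]

theorem PNat.eq_id_of_surjective_of_sub_le {σ : ℕ+ → ℕ+} (hσ : Surjective σ)
    (h : ∀ n m : ℕ+, ((σ m : ℕ) : ℤ) - (m : ℕ) ≤ (σ n : ℕ) - (n : ℕ)) : σ = id := by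
  obtain ⟨m₀, hm₀⟩ := hσ 1
  have h₁ := h 1 m₀
  have h₂ := h m₀ 1
  rw [hm₀] at h₁ h₂
  have := (σ 1).pos
  have := m₀.pos
  funext n
  have h₃ := h n 1
  have h₄ := h 1 n
  have := (σ n).pos
  exact PNat.coe_injective (by simp only [PNat.val_ofNat, id_eq] at *; omega)

theorem eq_of_lipschitzWith_equiv_Xset (hu : ∀ n, 1 ≤ u n) (hv : ∀ n, 1 ≤ v n)
    (h : Xset u ≃ Xset v) {L M : ℝ≥0} (hL : LipschitzWith L h) (hM : LipschitzWith M h.symm)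
    (hLM : (L * M : ℝ) < 2) : u = v := by
  obtain ⟨σ, hσ⟩ : ∃ σ, MapsIntervals h σ :=
    Classical.skolem.1 (exists_mapsTo_Iset hv hL.continuous h.injective)
  obtain ⟨τ, hτ⟩ : ∃ τ, MapsIntervals h.symm τ :=
    Classical.skolem.1 (exists_mapsTo_Iset hu hM.continuous h.symm.injective)
  have hτσ := hσ.leftInverse hu hτ h.symm_apply_apply
  have hστ := hτ.leftInverse hv hσ h.apply_symm_apply
  have hpos :=
    hσ.two_zpow_sub_le_of_lipschitzWith (hτ.apply_zero_of_leftInverse h.symm_apply_apply) hL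
  have hpos' :=
    hτ.two_zpow_sub_le_of_lipschitzWith (hσ.apply_zero_of_leftInverse h.apply_symm_apply) hM
  have hlen := hσ.two_zpow_sub_le_of_antilipschitzWith (hM.to_rightInverse h.symm_apply_apply)
  have hlen' := hτ.two_zpow_sub_le_of_antilipschitzWith (hL.to_rightInverse h.apply_symm_apply)
  have key {a b : ℤ} (ha : (2 : ℝ) ^ a ≤ L) (hb : (2 : ℝ) ^ b ≤ M) : a + b ≤ 0 :=
    add_nonpos_of_two_zpow_le ha hb hLM
  have hσid : σ = id := PNat.eq_id_of_surjective_of_sub_le (fun m => ⟨τ m, hστ m⟩)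
    fun n m => by have := key (hpos n) (hpos' (σ m)); rw [hτσ] at this; omega
  funext n
  have h₁ := key (hpos n) (hlen n)
  have h₂ := key (hlen' (σ n)) (hpos' (σ n))
  rw [hτσ] at h₂
  simp only [hσid, id_eq] at h₁ h₂
  push_cast at h₁ h₂
  omega

end Rigidity

section Models

open Classical in
noncomputable def seqOfSet (S : Set ℕ+) : ℕ+ → ℕ := fun n => if n ∈ S then 2 else 1

theorem one_le_seqOfSet (S : Set ℕ+) (n : ℕ+) : 1 ≤ seqOfSet S n := by
  unfold seqOfSet
  split_ifs <;> norm_num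

theorem seqOfSet_injective : Injective seqOfSet := by
  intro S T h
  ext n
  have := congrFun h n
  unfold seqOfSet at this
  split_ifs at this with hS hT hT <;> simp_all

open Classical in
noncomputable def rescale (S : Set ℕ+) (m : ℕ) (c x : ℝ) : ℝ :=
  if h : ∃ n ∈ S, x ∈ Iset n m then 1 / 2 ^ (h.choose : ℕ) + c * (x - 1 / 2 ^ (h.choose : ℕ))
  else x

variable {S : Set ℕ+} {m : ℕ} {c : ℝ} {n : ℕ+} {x y : ℝ}

theorem rescale_of_mem (hm : 1 ≤ m) (hn : n ∈ S) (hx : x ∈ Iset n m) :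
    rescale S m c x = 1 / 2 ^ (n : ℕ) + c * (x - 1 / 2 ^ (n : ℕ)) := by
  have hex : ∃ n ∈ S, x ∈ Iset n m := ⟨n, hn, hx⟩
  rw [rescale, dif_pos hex,
    PNat.coe_injective (eq_of_mem_Iset_of_mem_Iset hm hm hex.choose_spec.2 hx)]

theorem rescale_of_notMem {k : ℕ} (hm : 1 ≤ m) (hk : 1 ≤ k) (hn : n ∉ S) (hx : x ∈ Iset n k) :
    rescale S m c x = x := by
  rw [rescale, dif_neg]
  rintro ⟨l, hl, hxl⟩
  exact hn (PNat.coe_injective (eq_of_mem_Iset_of_mem_Iset hm hk hxl hx) ▸ hl)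

theorem rescale_zero : rescale S m c 0 = 0 := by
  rw [rescale, dif_neg]
  rintro ⟨n, -, hn⟩
  exact lt_irrefl _ (pos_of_mem_Iset hn)

theorem half_affine_mem_Iset {n m : ℕ} (hx : x ∈ Iset n m) :
    1 / 2 ^ n + 1 / 2 * (x - 1 / 2 ^ n) ∈ Iset n (m + 1) := by
  have : (1 : ℝ) / 2 ^ (n + (m + 1)) = 1 / 2 ^ (n + m) / 2 := by rw [← add_assoc, pow_succ]; ring
  exact ⟨by linarith [hx.1], by linarith [hx.2]⟩

theorem double_affine_mem_Iset {n m : ℕ} (hx : x ∈ Iset n (m + 1)) :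
    1 / 2 ^ n + 2 * (x - 1 / 2 ^ n) ∈ Iset n m := by
  have : (1 : ℝ) / 2 ^ (n + (m + 1)) = 1 / 2 ^ (n + m) / 2 := by rw [← add_assoc, pow_succ]; ring
  exact ⟨by linarith [hx.1], by linarith [hx.2]⟩

theorem rescale_half_mem_and_rescale_two (hx : x ∈ Iset n 1) :
    rescale S 1 (1 / 2) x ∈ Iset n (seqOfSet S n) ∧
      rescale S 2 2 (rescale S 1 (1 / 2) x) = x := by
  by_cases hn : n ∈ S
  · have hmem := half_affine_mem_Iset hx
    rw [rescale_of_mem le_rfl hn hx, rescale_of_mem one_le_two hn hmem]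
    simp only [seqOfSet, hn, if_true]
    exact ⟨hmem, by ring⟩
  · rw [rescale_of_notMem le_rfl le_rfl hn hx, rescale_of_notMem one_le_two le_rfl hn hx]
    simpa only [seqOfSet, hn, if_false, and_true] using hx

theorem rescale_two_mem_and_rescale_half (hy : y ∈ Iset n (seqOfSet S n)) :
    rescale S 2 2 y ∈ Iset n 1 ∧ rescale S 1 (1 / 2) (rescale S 2 2 y) = y := by
  by_cases hn : n ∈ S
  · simp only [seqOfSet, hn, if_true] at hy
    have hmem := double_affine_mem_Iset (m := 1) hy
    rw [rescale_of_mem one_le_two hn hy, rescale_of_mem le_rfl hn hmem]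
    exact ⟨hmem, by ring⟩
  · simp only [seqOfSet, hn, if_false] at hy
    rw [rescale_of_notMem one_le_two le_rfl hn hy, rescale_of_notMem le_rfl le_rfl hn hy]
    exact ⟨hy, rfl⟩

/-- Halving the intervals `I(n, 1)` with `n ∈ S` turns `X_𝟏` into `X_{u_S}`, `u_S = seqOfSet S`. -/
noncomputable def modelEquiv (S : Set ℕ+) : Xset (fun _ => 1) ≃ Xset (seqOfSet S) where
  toFun x := ⟨rescale S 1 (1 / 2) x, by
    rcases mem_Xset.1 x.2 with h0 | ⟨n, hn⟩
    · rw [h0, rescale_zero]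
      exact zero_mem_Xset _
    · exact Iset_subset_Xset _ n (rescale_half_mem_and_rescale_two hn).1⟩
  invFun y := ⟨rescale S 2 2 y, by
    rcases mem_Xset.1 y.2 with h0 | ⟨n, hn⟩
    · rw [h0, rescale_zero]
      exact zero_mem_Xset _
    · exact Iset_subset_Xset _ n (rescale_two_mem_and_rescale_half hn).1⟩
  left_inv x := by
    refine Subtype.ext ?_
    rcases mem_Xset.1 x.2 with h0 | ⟨n, hn⟩
    · simp only [h0, rescale_zero]
    · exact (rescale_half_mem_and_rescale_two hn).2
  right_inv y := by
    refine Subtype.ext ?_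
    rcases mem_Xset.1 y.2 with h0 | ⟨n, hn⟩
    · simp only [h0, rescale_zero]
    · exact (rescale_two_mem_and_rescale_half hn).2

@[simp]
theorem coe_modelEquiv (x : Xset (fun _ => 1)) :
    (modelEquiv S x : ℝ) = rescale S 1 (1 / 2) x := rfl

theorem sub_rescale_half_of_mem_Iset (hx : x ∈ Iset n 1) :
    0 ≤ x - rescale S 1 (1 / 2) x ∧ x - rescale S 1 (1 / 2) x ≤ (x - 1 / 2 ^ (n : ℕ)) / 2 := by
  by_cases hn : n ∈ S
  · rw [rescale_of_mem le_rfl hn hx]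
    constructor <;> linarith [hx.1]
  · rw [rescale_of_notMem le_rfl le_rfl hn hx]
    constructor <;> linarith [hx.1]

theorem sub_rescale_half_of_lt (hx : x ∈ Xset (fun _ => 1)) (hxm : x < 1 / 2 ^ (n : ℕ)) :
    0 ≤ x - rescale S 1 (1 / 2) x ∧ x - rescale S 1 (1 / 2) x ≤ (1 / 2 ^ (n : ℕ) - x) / 2 := by
  rcases mem_Xset.1 hx with rfl | ⟨k, hk⟩
  · rw [rescale_zero]
    constructor <;> linarith
  have hnk : (n : ℕ) < k := by
    by_contra! hkn
    linarith [hk.1, one_div_pow_le_one_div_pow_of_le (one_le_two (α := ℝ)) hkn]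
  have hgap := one_div_two_pow_le_half_of_lt hnk
  have hd := sub_rescale_half_of_mem_Iset (S := S) hk
  have hlen : (1 : ℝ) / 2 ^ ((k : ℕ) + 1) = 1 / 2 ^ (k : ℕ) / 2 := by rw [pow_succ]; ring
  exact ⟨hd.1, by linarith [hk.2, hd.2]⟩

theorem rescale_half_slope_bounds (hx : x ∈ Xset (fun _ => 1)) (hy : y ∈ Xset (fun _ => 1))
    (hxy : x ≤ y) :
    1 / 2 * (y - x) ≤ rescale S 1 (1 / 2) y - rescale S 1 (1 / 2) x ∧
      rescale S 1 (1 / 2) y - rescale S 1 (1 / 2) x ≤ 3 / 2 * (y - x) := by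
  rcases mem_Xset.1 hy with rfl | ⟨m, hm⟩
  · obtain rfl : x = 0 := by
      rcases mem_Xset.1 hx with h0 | ⟨k, hk⟩
      · exact h0
      · exact absurd hxy (not_le.2 (pos_of_mem_Iset hk))
    simp
  rcases lt_or_ge x (1 / 2 ^ (m : ℕ)) with hxm | hxm
  · have hdx := sub_rescale_half_of_lt (S := S) hx hxm
    have hdy := sub_rescale_half_of_mem_Iset (S := S) hm
    constructor <;> linarith
  have hxI : x ∈ Iset m 1 := ⟨hxm, hxy.trans hm.2⟩
  by_cases hmS : m ∈ S
  · rw [rescale_of_mem le_rfl hmS hm, rescale_of_mem le_rfl hmS hxI]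
    constructor <;> linarith
  · rw [rescale_of_notMem le_rfl le_rfl hmS hm, rescale_of_notMem le_rfl le_rfl hmS hxI]
    constructor <;> linarith

theorem dist_bounds_of_slope_bounds {s : Set ℝ} {f : ℝ → ℝ} {a b : ℝ} (ha : 0 ≤ a)
    (h : ∀ x ∈ s, ∀ y ∈ s, x ≤ y → a * (y - x) ≤ f y - f x ∧ f y - f x ≤ b * (y - x))
    (hx : x ∈ s) (hy : y ∈ s) :
    a * dist x y ≤ dist (f x) (f y) ∧ dist (f x) (f y) ≤ b * dist x y := by
  wlog hxy : x ≤ y generalizing x y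
  · rw [dist_comm x, dist_comm (f x)]
    exact this hy hx (le_of_not_ge hxy)
  obtain ⟨h₁, h₂⟩ := h x hx y hy hxy
  have : 0 ≤ f y - f x := (mul_nonneg ha (sub_nonneg.2 hxy)).trans h₁
  rw [dist_comm x, dist_comm (f x), Real.dist_eq, Real.dist_eq, abs_of_nonneg this,
    abs_of_nonneg (sub_nonneg.2 hxy)]
  exact ⟨h₁, h₂⟩

theorem isBiLipschitzEquiv_modelEquiv (S : Set ℕ+) : IsBiLipschitzEquiv (modelEquiv S) := by
  have hd (x y : Xset (fun _ => 1)) := dist_bounds_of_slope_bounds (by norm_num)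
    (fun x hx y hy => rescale_half_slope_bounds (S := S) hx hy) x.2 y.2
  have hL : LipschitzWith (3 / 2) (modelEquiv S) := LipschitzWith.of_dist_le_mul fun x y => by
    simpa [Subtype.dist_eq] using (hd x y).2
  have hA : AntilipschitzWith 2 (modelEquiv S) := AntilipschitzWith.of_le_mul_dist fun x y => by
    have := (hd x y).1
    rw [Subtype.dist_eq, Subtype.dist_eq, coe_modelEquiv, coe_modelEquiv]
    push_cast
    linarith
  exact ⟨⟨_, hL⟩, ⟨_, hA.to_rightInverse (modelEquiv S).apply_symm_apply⟩⟩

def modelSpace (S : Set ℕ+) : CptMet := ⟨Xset (seqOfSet S)⟩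

end Models

/-- The space of isometry classes of compact metric spaces at finite Lipschitz distance
from `X_𝟏` is not separable: no countable family in it is `d_L`-dense. -/
theorem MX1_not_separable :
    ¬ ∃ D : ℕ → CptMet,
      (∀ n, lipDist ↥(Xset (fun _ => 1)) (D n).carrier ≠ ⊤) ∧
      (∀ Y : CptMet, lipDist ↥(Xset (fun _ => 1)) Y.carrier ≠ ⊤ →
        ∀ ε : ℝ≥0∞, 0 < ε → ∃ n, lipDist Y.carrier (D n).carrier < ε) := by
  rintro ⟨D, -, hdense⟩
  have hε : 0 < ENNReal.ofReal (Real.log 2 / 2) :=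
    ENNReal.ofReal_pos.2 (half_pos (Real.log_pos one_lt_two))
  choose Φ hΦ using fun S => hdense (modelSpace S)
    (lipDist_ne_top_of_isBiLipschitzEquiv (isBiLipschitzEquiv_modelEquiv S)) _ hε
  have hΦ_not_injective : ¬ Injective Φ := fun hΦinj =>
    cantor_injective _ (Nat.succPNat_injective.comp hΦinj)
  obtain ⟨S, T, hΦST, hST⟩ := not_injective_iff.1 hΦ_not_injective
  have hT := hΦ T
  rw [← hΦST] at hT
  obtain ⟨h, L, M, hL, hM, hLM⟩ :=
    exists_lipschitzWith_equiv_of_lipDist_lt_of_lipDist_lt (hΦ S) hT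
  rw [add_halves, Real.exp_log two_pos] at hLM
  exact hST <| seqOfSet_injective <|
    eq_of_lipschitzWith_equiv_Xset (one_le_seqOfSet S) (one_le_seqOfSet T) h hL hM hLM
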